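/- (Continuity of h(T, ·) in the entropy metric) Let (X, μ) be a probability space, T : X → X a measure-preserving map, and f : X → F, g : X → G measurable maps into finite sets. Then |h(T, f) − h(T, g)| ≤ H[f | g] + H[g | f], where h(T, f) = lim_{n→∞} H(ξ_T^n)/n and H[· | ·] denotes conditional Shannon entropy. -/

import Mathlib

open MeasureTheory Filter Set

/-- Shannon entropy of a finite measurable partition, encoded as a map `f : X → F`
into a finite set, with respect to the measure `μ` (convention `0 log 0 = 0`). -/
noncomputable def shannonEntropy {X : Type*} [MeasurableSpace X] (μ : Measure X)
    {F : Type*} [Fintype F] (f : X → F) : ℝ :=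
  -∑ a : F, (μ (f ⁻¹' {a})).toReal * Real.log (μ (f ⁻¹' {a})).toReal

/-- `H(ξ_T^n)`: the Shannon entropy of the joint partition
`x ↦ (f x, f (T x), …, f (T^[n-1] x))`. -/
noncomputable def jointH {X : Type*} [MeasurableSpace X] (μ : Measure X)
    (T : X → X) {F : Type*} [Fintype F] (f : X → F) (n : ℕ) : ℝ :=
  shannonEntropy μ (fun x => (fun i : Fin n => f (T^[(i : ℕ)] x)))

/-- Conditional Shannon entropy `H[f | g]` of `f` given `g`: the average over the
cells of `g` of the entropy of `f` with respect to the normalized restriction of `μ`. -/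
noncomputable def condShannonEntropy {X : Type*} [MeasurableSpace X] (μ : Measure X)
    {F G : Type*} [Fintype F] [Fintype G] (f : X → F) (g : X → G) : ℝ :=
  ∑ b : G, (μ (g ⁻¹' {b})).toReal *
    shannonEntropy ((μ (g ⁻¹' {b}))⁻¹ • μ.restrict (g ⁻¹' {b})) f

/-!
Since `T` preserves `μ`, `H(ξ_T^{m+n}) ≤ H(ξ_T^m) + H(ξ_T^n)`, so Fekete's lemma gives the
limits. For the estimate, write `ξ_f^n`, `ξ_g^n` for the joint partitions of `f` and `g`:
`H(ξ_f^n) ≤ H(ξ_f^n ∨ ξ_g^n) = H(ξ_g^n) + H[ξ_f^n | ξ_g^n]`, and by subadditivity of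
conditional entropy and its monotonicity in the conditioning partition,
`H[ξ_f^n | ξ_g^n] ≤ ∑_{i<n} H[f ∘ T^i | g ∘ T^i] = n H[f | g]`. Divide by `n`, let `n → ∞`
and exchange `f` and `g`.
-/

open ProbabilityTheory

namespace Real

lemma negMulLog_add_le {x y : ℝ} (hx : 0 ≤ x) (hy : 0 ≤ y) :
    negMulLog (x + y) ≤ negMulLog x + negMulLog y := by
  have mul_log_le {a b : ℝ} (ha : 0 ≤ a) (hb : 0 ≤ b) : a * log a ≤ a * log (a + b) := by
    rcases ha.eq_or_lt with rfl | ha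
    · simp
    · exact mul_le_mul_of_nonneg_left (log_le_log ha (le_add_of_nonneg_right hb)) ha.le
  have hxy := mul_log_le hx hy
  have hyx := mul_log_le hy hx
  rw [add_comm y x] at hyx
  simp only [negMulLog, neg_mul, add_mul]
  linarith

lemma negMulLog_sum_le {ι : Type*} (s : Finset ι) (p : ι → ℝ) (hp : ∀ i ∈ s, 0 ≤ p i) :
    negMulLog (∑ i ∈ s, p i) ≤ ∑ i ∈ s, negMulLog (p i) :=
  Finset.le_sum_of_subadditive_on_pred negMulLog (0 ≤ ·) (by simp)
    (fun _ _ hx hy => negMulLog_add_le hx hy) (fun _ _ => add_nonneg) p hp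

lemma sum_negMulLog_eq_negMulLog_sum_add {ι : Type*} (s : Finset ι) (q : ι → ℝ)
    (hq : ∀ i ∈ s, 0 ≤ q i) :
    ∑ i ∈ s, negMulLog (q i) = negMulLog (∑ i ∈ s, q i) +
      ∑ i ∈ s, (∑ j ∈ s, q j) * negMulLog (q i / ∑ j ∈ s, q j) := by
  rcases (Finset.sum_nonneg hq).eq_or_lt with h | h
  · have hq0 := (Finset.sum_eq_zero_iff_of_nonneg hq).1 h.symm
    rw [← h, Finset.sum_eq_zero fun i hi => by simp [hq0 i hi]]
    simp
  · set t := ∑ j ∈ s, q j with ht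
    calc ∑ i ∈ s, negMulLog (q i) = ∑ i ∈ s, negMulLog (t * (q i / t)) := by
          simp_rw [mul_div_cancel₀ _ h.ne']
      _ = (∑ i ∈ s, q i / t) * negMulLog t + ∑ i ∈ s, t * negMulLog (q i / t) := by
          simp_rw [negMulLog_mul, Finset.sum_add_distrib, Finset.sum_mul]
      _ = _ := by rw [← Finset.sum_div, ← ht, div_self h.ne', one_mul]

lemma sum_mul_negMulLog_div_le {ι : Type*} (s : Finset ι) (p q : ι → ℝ)
    (hq : ∀ i ∈ s, 0 ≤ q i) (hqp : ∀ i ∈ s, q i ≤ p i) :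
    ∑ i ∈ s, p i * negMulLog (q i / p i) ≤
      (∑ i ∈ s, p i) * negMulLog ((∑ i ∈ s, q i) / ∑ i ∈ s, p i) := by
  have hp i (hi : i ∈ s) : 0 ≤ p i := (hq i hi).trans (hqp i hi)
  rcases (Finset.sum_nonneg hp).eq_or_lt with h | h
  · have hp0 := (Finset.sum_eq_zero_iff_of_nonneg hp).1 h.symm
    rw [← h, zero_mul]
    exact (Finset.sum_eq_zero fun i hi => by simp [hp0 i hi]).le
  set t := ∑ i ∈ s, p i
  have weighted_point i (hi : i ∈ s) : p i / t * (q i / p i) = q i / t := by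
    rcases (hp i hi).eq_or_lt with h0 | h0
    · simp [le_antisymm (h0 ▸ hqp i hi) (hq i hi), ← h0]
    · field_simp
  have jensen := concaveOn_negMulLog.le_map_sum (t := s) (w := fun i => p i / t)
    (p := fun i => q i / p i) (fun i hi => div_nonneg (hp i hi) h.le)
    (by rw [← Finset.sum_div, div_self h.ne'])
    (fun i hi => Set.mem_Ici.2 (div_nonneg (hq i hi) (hp i hi)))
  simp only [smul_eq_mul, Finset.sum_congr rfl weighted_point, ← Finset.sum_div] at jensen
  calc ∑ i ∈ s, p i * negMulLog (q i / p i)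
      = t * ∑ i ∈ s, p i / t * negMulLog (q i / p i) := by
        rw [Finset.mul_sum]
        exact Finset.sum_congr rfl fun i _ => by field_simp
    _ ≤ t * negMulLog ((∑ i ∈ s, q i) / t) := mul_le_mul_of_nonneg_left jensen h.le

end Real

section ShannonEntropy

variable {X : Type*} [MeasurableSpace X] {μ : Measure X} {F G : Type*} [Fintype F] [Fintype G]

lemma shannonEntropy_eq_sum_negMulLog (μ : Measure X) (f : X → F) :
    shannonEntropy μ f = ∑ a, Real.negMulLog (μ.real (f ⁻¹' {a})) := by
  simp [shannonEntropy, Real.negMulLog, measureReal_def]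

lemma shannonEntropy_nonneg [IsZeroOrProbabilityMeasure μ] (f : X → F) :
    0 ≤ shannonEntropy μ f := by
  rw [shannonEntropy_eq_sum_negMulLog]
  exact Finset.sum_nonneg fun a _ => Real.negMulLog_nonneg measureReal_nonneg measureReal_le_one

lemma shannonEntropy_of_unique [IsZeroOrProbabilityMeasure μ] [Unique F] (f : X → F) :
    shannonEntropy μ f = 0 := by
  have hf : f ⁻¹' {default} = univ := eq_univ_of_forall fun x => Unique.eq_default (f x)
  rcases eq_zero_or_isProbabilityMeasure μ with rfl | _ <;>
    simp [shannonEntropy_eq_sum_negMulLog, hf]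

lemma condShannonEntropy_eq_sum_cond (μ : Measure X) (f : X → F) (g : X → G) :
    condShannonEntropy μ f g =
      ∑ b, μ.real (g ⁻¹' {b}) * shannonEntropy μ[|g ⁻¹' {b}] f :=
  rfl

lemma condShannonEntropy_nonneg (f : X → F) (g : X → G) : 0 ≤ condShannonEntropy μ f g := by
  rw [condShannonEntropy_eq_sum_cond]
  exact Finset.sum_nonneg fun b _ => mul_nonneg measureReal_nonneg (shannonEntropy_nonneg f)

lemma condShannonEntropy_of_unique [Unique F] (f : X → F) (g : X → G) :
    condShannonEntropy μ f g = 0 := by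
  simp [condShannonEntropy_eq_sum_cond, shannonEntropy_of_unique]

end ShannonEntropy

section Measurable

variable {X Y : Type*} [MeasurableSpace X] [MeasurableSpace Y] {μ : Measure X} {ν : Measure Y}
  {F G K : Type*} [Fintype F] [MeasurableSpace F] [MeasurableSingletonClass F]
  [Fintype G] [MeasurableSpace G] [MeasurableSingletonClass G]
  {f : X → F} {g : X → G}

lemma measureReal_comp_preimage_singleton [IsFiniteMeasure μ] [DecidableEq K] (hf : Measurable f)
    (φ : F → K) (c : K) :
    μ.real ((φ ∘ f) ⁻¹' {c}) = ∑ a with φ a = c, μ.real (f ⁻¹' {a}) := by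
  have hcell : (φ ∘ f) ⁻¹' {c} = f ⁻¹' ↑({a | φ a = c} : Finset F) := by
    ext x
    simp
  rw [hcell, sum_measureReal_preimage_singleton _ fun a _ => hf (measurableSet_singleton a)]

lemma measureReal_preimage_singleton_eq_sum_prod [IsFiniteMeasure μ] (hf : Measurable f)
    (hg : Measurable g) (b : G) :
    μ.real (g ⁻¹' {b}) = ∑ a, μ.real ((fun x => (f x, g x)) ⁻¹' {(a, b)}) := by
  classical
  simpa [Function.comp_def, Finset.sum_filter, Fintype.sum_prod_type] using
    measureReal_comp_preimage_singleton (hf.prodMk hg) Prod.snd b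

lemma measureReal_preimage_prod_comp [IsFiniteMeasure μ] [DecidableEq K] (hf : Measurable f)
    (hg : Measurable g) (φ : G → K) (a : F) (c : K) :
    μ.real ((fun x => (f x, φ (g x))) ⁻¹' {(a, c)}) =
      ∑ b with φ b = c, μ.real ((fun x => (f x, g x)) ⁻¹' {(a, b)}) := by
  classical
  simpa [Function.comp_def, Finset.sum_filter, Fintype.sum_prod_type, ite_and] using
    measureReal_comp_preimage_singleton (hf.prodMk hg) (Prod.map id φ) (a, c)

lemma shannonEntropy_comp_le [Fintype K] [IsFiniteMeasure μ] (hf : Measurable f) (φ : F → K) :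
    shannonEntropy μ (φ ∘ f) ≤ shannonEntropy μ f := by
  classical
  rw [shannonEntropy_eq_sum_negMulLog, shannonEntropy_eq_sum_negMulLog,
    ← Finset.sum_fiberwise Finset.univ φ]
  refine Finset.sum_le_sum fun c _ => ?_
  rw [measureReal_comp_preimage_singleton hf]
  exact Real.negMulLog_sum_le _ _ fun a _ => measureReal_nonneg

lemma shannonEntropy_comp_of_measurePreserving {S : Y → X} (hS : MeasurePreserving S ν μ)
    (hf : Measurable f) : shannonEntropy ν (f ∘ S) = shannonEntropy μ f := by
  simp only [shannonEntropy_eq_sum_negMulLog, Set.preimage_comp,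
    hS.measureReal_preimage (hf (measurableSet_singleton _)).nullMeasurableSet]

lemma condShannonEntropy_eq_sum_sum [Fintype K] (hg : Measurable g) (f : X → K) :
    condShannonEntropy μ f g = ∑ b, ∑ a, μ.real (g ⁻¹' {b}) * Real.negMulLog
      (μ.real ((fun x => (f x, g x)) ⁻¹' {(a, b)}) / μ.real (g ⁻¹' {b})) := by
  simp only [condShannonEntropy_eq_sum_cond, shannonEntropy_eq_sum_negMulLog, Finset.mul_sum]
  refine Finset.sum_congr rfl fun b _ => Finset.sum_congr rfl fun a _ => ?_
  have hcell : g ⁻¹' {b} ∩ f ⁻¹' {a} = (fun x => (f x, g x)) ⁻¹' {(a, b)} := by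
    ext x
    simp [and_comm]
  have hcond : μ[|g ⁻¹' {b}].real (f ⁻¹' {a}) =
      μ.real ((fun x => (f x, g x)) ⁻¹' {(a, b)}) / μ.real (g ⁻¹' {b}) := by
    rw [measureReal_def, cond_apply (hg (measurableSet_singleton b)), ENNReal.toReal_mul,
      ENNReal.toReal_inv, inv_mul_eq_div, hcell, ← measureReal_def, ← measureReal_def]
  rw [hcond]

lemma shannonEntropy_prod_eq_add_condShannonEntropy [IsFiniteMeasure μ] (hf : Measurable f)
    (hg : Measurable g) :
    shannonEntropy μ (fun x => (f x, g x)) = shannonEntropy μ g + condShannonEntropy μ f g := by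
  rw [condShannonEntropy_eq_sum_sum hg, shannonEntropy_eq_sum_negMulLog,
    shannonEntropy_eq_sum_negMulLog, Fintype.sum_prod_type_right, ← Finset.sum_add_distrib]
  refine Finset.sum_congr rfl fun b _ => ?_
  rw [measureReal_preimage_singleton_eq_sum_prod hf hg b]
  exact Real.sum_negMulLog_eq_negMulLog_sum_add _ _ fun a _ => measureReal_nonneg

lemma condShannonEntropy_le_comp [IsFiniteMeasure μ] [Fintype K] [MeasurableSpace K]
    [MeasurableSingletonClass K] (hf : Measurable f) (hg : Measurable g) (φ : G → K) :
    condShannonEntropy μ f g ≤ condShannonEntropy μ f (φ ∘ g) := by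
  classical
  rw [condShannonEntropy_eq_sum_sum hg,
    condShannonEntropy_eq_sum_sum ((Measurable.of_discrete (f := φ)).comp hg),
    ← Finset.sum_fiberwise Finset.univ φ]
  refine Finset.sum_le_sum fun c _ => ?_
  rw [Finset.sum_comm]
  refine Finset.sum_le_sum fun a _ => ?_
  rw [measureReal_comp_preimage_singleton hg, Function.comp_def,
    measureReal_preimage_prod_comp hf hg]
  exact Real.sum_mul_negMulLog_div_le _ _ _ (fun b _ => measureReal_nonneg) fun b _ =>
    measureReal_mono fun x hx => congrArg Prod.snd hx

lemma shannonEntropy_prod_le [IsZeroOrProbabilityMeasure μ] (hf : Measurable f)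
    (hg : Measurable g) :
    shannonEntropy μ (fun x => (f x, g x)) ≤ shannonEntropy μ f + shannonEntropy μ g := by
  rcases eq_zero_or_isProbabilityMeasure μ with rfl | _
  · simp [shannonEntropy_eq_sum_negMulLog]
  have hconst : ((fun _ => ()) ∘ g) ⁻¹' {()} = univ := eq_univ_of_forall fun _ => rfl
  have hcond : condShannonEntropy μ f g ≤ shannonEntropy μ f := by
    simpa [condShannonEntropy_eq_sum_cond, hconst] using
      condShannonEntropy_le_comp (μ := μ) hf hg fun _ => ()
  rw [shannonEntropy_prod_eq_add_condShannonEntropy hf hg]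
  linarith

end Measurable

section Conditional

variable {X Y : Type*} [MeasurableSpace X] [MeasurableSpace Y] {μ : Measure X} {ν : Measure Y}
  {F G K : Type*} [Fintype F] [MeasurableSpace F] [MeasurableSingletonClass F]
  [Fintype G] [Fintype K]

lemma condShannonEntropy_comp_le {f : X → F} (hf : Measurable f) (φ : F → K) (g : X → G) :
    condShannonEntropy μ (φ ∘ f) g ≤ condShannonEntropy μ f g := by
  simp only [condShannonEntropy_eq_sum_cond]
  exact Finset.sum_le_sum fun _ _ =>
    mul_le_mul_of_nonneg_left (shannonEntropy_comp_le hf φ) measureReal_nonneg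

variable [MeasurableSpace K] [MeasurableSingletonClass K]

lemma condShannonEntropy_prod_le {f₁ : X → F} {f₂ : X → K} (hf₁ : Measurable f₁)
    (hf₂ : Measurable f₂) (g : X → G) :
    condShannonEntropy μ (fun x => (f₁ x, f₂ x)) g ≤
      condShannonEntropy μ f₁ g + condShannonEntropy μ f₂ g := by
  simp only [condShannonEntropy_eq_sum_cond, ← Finset.sum_add_distrib, ← mul_add]
  exact Finset.sum_le_sum fun _ _ =>
    mul_le_mul_of_nonneg_left (shannonEntropy_prod_le hf₁ hf₂) measureReal_nonneg

variable [MeasurableSpace G] [MeasurableSingletonClass G]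

lemma condShannonEntropy_comp_of_measurePreserving {S : Y → X} (hS : MeasurePreserving S ν μ)
    {f : X → F} {g : X → G} (hf : Measurable f) (hg : Measurable g) :
    condShannonEntropy ν (f ∘ S) (g ∘ S) = condShannonEntropy μ f g := by
  have hpair : (fun y => ((f ∘ S) y, (g ∘ S) y)) = (fun x => (f x, g x)) ∘ S := rfl
  rw [condShannonEntropy_eq_sum_sum (hg.comp hS.measurable), condShannonEntropy_eq_sum_sum hg,
    hpair]
  simp only [Set.preimage_comp,
    hS.measureReal_preimage (hg (measurableSet_singleton _)).nullMeasurableSet,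
    hS.measureReal_preimage ((hf.prodMk hg) (measurableSet_singleton _)).nullMeasurableSet]

end Conditional

lemma le_add_of_tendsto_div_of_le_add_mul {u v : ℕ → ℝ} {a b c : ℝ}
    (hu : Tendsto (fun n => u n / n) atTop (nhds a))
    (hv : Tendsto (fun n => v n / n) atTop (nhds b))
    (huv : ∀ n, u n ≤ v n + n * c) : a ≤ b + c := by
  refine le_of_tendsto_of_tendsto hu (hv.add_const c) ?_
  filter_upwards [eventually_gt_atTop 0] with n hn
  have hn : (0 : ℝ) < n := Nat.cast_pos.2 hn
  rw [div_add' _ _ _ hn.ne', div_le_div_iff_of_pos_right hn, mul_comm]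
  exact huv n

section Itinerary

variable {X : Type*} {T : X → X} {F G : Type*}

def itinerary (T : X → X) (f : X → F) (n : ℕ) (x : X) : Fin n → F :=
  fun i => f (T^[i] x)

lemma itinerary_add (f : X → F) (m n : ℕ) (x : X) :
    itinerary T f (m + n) x = Fin.append (itinerary T f m x) (itinerary T f n (T^[m] x)) := by
  ext i
  refine Fin.addCases (fun i => ?_) (fun i => ?_) i
  · simp [itinerary]
  · simp [itinerary, ← Function.iterate_add_apply, add_comm]

lemma itinerary_succ (f : X → F) (n : ℕ) (x : X) :
    itinerary T f (n + 1) x = Fin.snoc (itinerary T f n x) (f (T^[n] x)) := by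
  ext i
  refine Fin.lastCases ?_ (fun i => ?_) i <;> simp [itinerary]

variable [MeasurableSpace X] {μ : Measure X}

lemma jointH_eq_shannonEntropy_itinerary [Fintype F] (f : X → F) (n : ℕ) :
    jointH μ T f n = shannonEntropy μ (itinerary T f n) :=
  rfl

lemma measurable_itinerary [MeasurableSpace F] (hT : Measurable T) {f : X → F} (hf : Measurable f)
    (n : ℕ) : Measurable (itinerary T f n) :=
  measurable_pi_lambda _ fun i => hf.comp (hT.iterate i)

variable [Fintype F] [MeasurableSpace F] [MeasurableSingletonClass F]
  [Fintype G] [MeasurableSpace G] [MeasurableSingletonClass G]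

lemma jointH_subadditive [IsZeroOrProbabilityMeasure μ] (hT : MeasurePreserving T μ μ)
    {f : X → F} (hf : Measurable f) : Subadditive (jointH μ T f) := by
  intro m n
  have hm := measurable_itinerary hT.measurable hf m
  have hn := (measurable_itinerary hT.measurable hf n).comp (hT.iterate m).measurable
  calc jointH μ T f (m + n)
      = shannonEntropy μ ((fun p => Fin.append p.1 p.2) ∘
          fun x => (itinerary T f m x, (itinerary T f n ∘ T^[m]) x)) := by
        rw [jointH_eq_shannonEntropy_itinerary]
        exact congrArg _ (funext (itinerary_add f m n))
    _ ≤ shannonEntropy μ fun x => (itinerary T f m x, (itinerary T f n ∘ T^[m]) x) :=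
        shannonEntropy_comp_le (hm.prodMk hn) _
    _ ≤ shannonEntropy μ (itinerary T f m) + shannonEntropy μ (itinerary T f n ∘ T^[m]) :=
        shannonEntropy_prod_le hm hn
    _ = jointH μ T f m + jointH μ T f n := by
        rw [shannonEntropy_comp_of_measurePreserving (hT.iterate m)
          (measurable_itinerary hT.measurable hf n)]
        rfl

lemma tendsto_jointH_div [IsZeroOrProbabilityMeasure μ] (hT : MeasurePreserving T μ μ)
    {f : X → F} (hf : Measurable f) :
    Tendsto (fun n => jointH μ T f n / n) atTop (nhds (jointH_subadditive hT hf).lim) :=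
  (jointH_subadditive hT hf).tendsto_lim
    ⟨0, by rintro _ ⟨n, rfl⟩; exact div_nonneg (shannonEntropy_nonneg _) n.cast_nonneg⟩

lemma condShannonEntropy_itinerary_succ_le [IsFiniteMeasure μ] (hT : MeasurePreserving T μ μ)
    {f : X → F} {g : X → G} (hf : Measurable f) (hg : Measurable g) (n : ℕ) :
    condShannonEntropy μ (itinerary T f (n + 1)) (itinerary T g (n + 1)) ≤
      condShannonEntropy μ (itinerary T f n) (itinerary T g n) + condShannonEntropy μ f g := by
  have hfn := measurable_itinerary hT.measurable hf n
  have hfT := hf.comp (hT.iterate n).measurable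
  have hgn := measurable_itinerary hT.measurable hg (n + 1)
  have hsnoc : itinerary T f (n + 1) = (fun p => Fin.snoc (α := fun _ => F) p.1 p.2) ∘
      fun x => (itinerary T f n x, (f ∘ T^[n]) x) :=
    funext (itinerary_succ f n)
  calc condShannonEntropy μ (itinerary T f (n + 1)) (itinerary T g (n + 1))
      ≤ condShannonEntropy μ (fun x => (itinerary T f n x, (f ∘ T^[n]) x))
          (itinerary T g (n + 1)) := by
        rw [hsnoc]
        exact condShannonEntropy_comp_le (hfn.prodMk hfT) _ _
    _ ≤ condShannonEntropy μ (itinerary T f n) (itinerary T g (n + 1)) +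
          condShannonEntropy μ (f ∘ T^[n]) (itinerary T g (n + 1)) :=
        condShannonEntropy_prod_le hfn hfT _
    _ ≤ condShannonEntropy μ (itinerary T f n) (Fin.init ∘ itinerary T g (n + 1)) +
          condShannonEntropy μ (f ∘ T^[n]) ((· (Fin.last n)) ∘ itinerary T g (n + 1)) :=
        add_le_add (condShannonEntropy_le_comp hfn hgn _) (condShannonEntropy_le_comp hfT hgn _)
    _ = condShannonEntropy μ (itinerary T f n) (itinerary T g n) +
          condShannonEntropy μ (f ∘ T^[n]) (g ∘ T^[n]) := rfl
    _ = condShannonEntropy μ (itinerary T f n) (itinerary T g n) + condShannonEntropy μ f g := by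
        rw [condShannonEntropy_comp_of_measurePreserving (hT.iterate n) hf hg]

lemma condShannonEntropy_itinerary_le [IsFiniteMeasure μ] (hT : MeasurePreserving T μ μ)
    {f : X → F} {g : X → G} (hf : Measurable f) (hg : Measurable g) (n : ℕ) :
    condShannonEntropy μ (itinerary T f n) (itinerary T g n) ≤
      n * condShannonEntropy μ f g := by
  induction n with
  | zero => simp [condShannonEntropy_of_unique]
  | succ n ih =>
    calc condShannonEntropy μ (itinerary T f (n + 1)) (itinerary T g (n + 1))
        ≤ condShannonEntropy μ (itinerary T f n) (itinerary T g n) + condShannonEntropy μ f g :=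
          condShannonEntropy_itinerary_succ_le hT hf hg n
      _ ≤ n * condShannonEntropy μ f g + condShannonEntropy μ f g := by gcongr
      _ = (n + 1 : ℕ) * condShannonEntropy μ f g := by push_cast; ring

lemma jointH_le_add [IsFiniteMeasure μ] (hT : MeasurePreserving T μ μ) {f : X → F}
    {g : X → G} (hf : Measurable f) (hg : Measurable g) (n : ℕ) :
    jointH μ T f n ≤ jointH μ T g n + n * condShannonEntropy μ f g := by
  have hfn := measurable_itinerary hT.measurable hf n
  have hgn := measurable_itinerary hT.measurable hg n
  calc jointH μ T f n
      = shannonEntropy μ (Prod.fst ∘ fun x => (itinerary T f n x, itinerary T g n x)) := rfl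
    _ ≤ shannonEntropy μ fun x => (itinerary T f n x, itinerary T g n x) :=
        shannonEntropy_comp_le (hfn.prodMk hgn) _
    _ = jointH μ T g n + condShannonEntropy μ (itinerary T f n) (itinerary T g n) :=
        shannonEntropy_prod_eq_add_condShannonEntropy hfn hgn
    _ ≤ jointH μ T g n + n * condShannonEntropy μ f g :=
        add_le_add_right (condShannonEntropy_itinerary_le hT hf hg n) _

end Itinerary

/-- Continuity of `h(T,·)` in the entropy metric:
`|h(T,f) − h(T,g)| ≤ H[f|g] + H[g|f]`, where `h(T,f) = lim_n H(ξ_T^n)/n`. -/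
theorem entropy_metric_continuity {X : Type*} [MeasurableSpace X] (μ : Measure X)
    [IsProbabilityMeasure μ] (T : X → X) (hT : MeasurePreserving T μ μ)
    {F G : Type*} [Fintype F] [MeasurableSpace F] [MeasurableSingletonClass F]
    [Fintype G] [MeasurableSpace G] [MeasurableSingletonClass G]
    (f : X → F) (g : X → G) (hf : Measurable f) (hg : Measurable g) :
    ∃ hf' hg' : ℝ,
      Tendsto (fun n : ℕ => jointH μ T f n / (n : ℝ)) atTop (nhds hf') ∧
      Tendsto (fun n : ℕ => jointH μ T g n / (n : ℝ)) atTop (nhds hg') ∧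
      |hf' - hg'| ≤ condShannonEntropy μ f g + condShannonEntropy μ g f := by
  have hfg := le_add_of_tendsto_div_of_le_add_mul (tendsto_jointH_div hT hf)
    (tendsto_jointH_div hT hg) (jointH_le_add hT hf hg)
  have hgf := le_add_of_tendsto_div_of_le_add_mul (tendsto_jointH_div hT hg)
    (tendsto_jointH_div hT hf) (jointH_le_add hT hg hf)
  refine ⟨_, _, tendsto_jointH_div hT hf, tendsto_jointH_div hT hg,
    abs_sub_le_iff.2 ⟨?_, ?_⟩⟩ <;>
    linarith [condShannonEntropy_nonneg (μ := μ) f g, condShannonEntropy_nonneg (μ := μ) g f]
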